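/- Assume (A1). Let f_0 ∈ H_1, let u = (u_m)_{m≥0} be a positive decreasing sequence, C > 0, r a nonnegative integer, and K a positive number with K ≤ 1. Then for every positive integer n, every estimator f̂ ∈ S_n and every integer m ≥ r: sup over f ∈ (f_0 + C_{f_0}(K,u,C,r)) ∩ H_1 of E_f‖f̂ − f‖_H² is at least ( min{ K / K_{∞,f_0}(V_{m+2} ⊖ V_m), C·u_{m+1} } )² · ( π_{f_0}({0,…,m−1}) )^n, where V_{m+2} ⊖ V_m denotes V_{m+2} ∩ V_m^⊥. -/

import Mathlib

/-! Le Cam's two-point method. Since `V_m ⊆ V_{m+2}` has codimension 2, the space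
`V_{m+2} ⊖ V_m` contains a unit vector `g` with `∫ g dν = 0`. For
`δ = min (K / K_{∞,f₀}(V_{m+2} ⊖ V_m), C u_{m+1})` we have `|δ g| ≤ K f₀ ≤ f₀`, so `f₀ ± δ g`
are densities, and `δ g ∈ V_{m+2}` with `‖δ g‖ ≤ C u_{m+1}`, so both lie in the class.
As `δ g ⊥ Π1_k` for `k < m`, the mixtures `π_{f₀ ± δ g}` both agree with `π_{f₀}` on
`{0,…,m-1}`, and so do their `n`-fold products on `{0,…,m-1}ⁿ`. On that event
`‖f̂ - (f₀ + δ g)‖² + ‖f̂ - (f₀ - δ g)‖² ≥ ‖2 δ g‖² / 2 = 2δ²`, so one of the two risks is at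
least `δ² π_{f₀}({0,…,m-1})ⁿ`. -/

open MeasureTheory ENNReal

noncomputable section

/-- Weighted essential sup norm `‖f‖_{∞,f₀} = ν-ess sup |f|/f₀`. -/
def wnorm {α : Type*} [MeasurableSpace α] {ν : Measure α} (f f₀ : Lp ℝ 2 ν) : ℝ≥0∞ :=
  essSup (fun θ => ENNReal.ofReal |f θ| / ENNReal.ofReal (f₀ θ)) ν

/-- `K_{∞,f₀}(V)`. -/
def Kinf {α : Type*} [MeasurableSpace α] {ν : Measure α} (f₀ : Lp ℝ 2 ν)
    (V : Set (Lp ℝ 2 ν)) : ℝ≥0∞ :=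
  ⨆ (g : Lp ℝ 2 ν) (_ : g ∈ V ∧ ‖g‖ = 1), wnorm g f₀

/-- `V_m = span(Π 1_k, 0 ≤ k < m)`. -/
def Vspan {α : Type*} [MeasurableSpace α] {ν : Measure α} (Pi1 : ℕ → Lp ℝ 2 ν) (m : ℕ) :
    Submodule ℝ (Lp ℝ 2 ν) :=
  Submodule.span ℝ (Pi1 '' Set.Iio m)

/-- The approximation class `C(u,C,r)` (distance to `V_m` in place of `‖f - Proj_{V_m} f‖`). -/
def classV {α : Type*} [MeasurableSpace α] {ν : Measure α} (Pi1 : ℕ → Lp ℝ 2 ν)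
    (u : ℕ → ℝ) (C : ℝ) (r : ℕ) : Set (Lp ℝ 2 ν) :=
  {f | ∀ m, r ≤ m → Metric.infDist f (Vspan Pi1 m : Set (Lp ℝ 2 ν)) ≤ C * u m}

/-- Probability densities belonging to `H`. -/
def H1 {α : Type*} [MeasurableSpace α] (ν : Measure α) : Set (Lp ℝ 2 ν) :=
  {f | 0 ≤ᵐ[ν] ⇑f ∧ ∫ θ, f θ ∂ν = 1}

/-- The mixture distribution `π_f` on `ℤ₊`. -/
def mixN {α : Type*} [MeasurableSpace α] (ν : Measure α) (π : α → ℕ → ℝ)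
    (f : Lp ℝ 2 ν) : Measure ℕ :=
  Measure.sum fun k => ENNReal.ofReal (∫ θ, π θ k * f θ ∂ν) • Measure.dirac k

/-- `E_f ‖est - f‖²` for `n` i.i.d. observations from `π_f`. -/
def riskN {α : Type*} [MeasurableSpace α] (ν : Measure α) (π : α → ℕ → ℝ) (n : ℕ)
    (f : Lp ℝ 2 ν) (est : (Fin n → ℕ) → Lp ℝ 2 ν) : ℝ≥0∞ :=
  ∫⁻ x, (‖est x - f‖₊ : ℝ≥0∞) ^ 2 ∂(Measure.pi fun _ : Fin n => mixN ν π f)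

section TwoPoint

variable {E : Type*} [NormedAddCommGroup E]

lemma two_mul_ofReal_sq_le_add_sq {δ : ℝ} (hδ : 0 ≤ δ) {f₁ f₂ : E} (h : 2 * δ ≤ ‖f₁ - f₂‖)
    (y : E) :
    2 * ENNReal.ofReal δ ^ 2 ≤ (‖y - f₁‖₊ : ℝ≥0∞) ^ 2 + (‖y - f₂‖₊ : ℝ≥0∞) ^ 2 := by
  have htri : 2 * δ ≤ ‖y - f₁‖ + ‖y - f₂‖ :=
    h.trans ((norm_sub_le_norm_sub_add_norm_sub f₁ y f₂).trans_eq (by rw [norm_sub_rev]))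
  have hreal : 2 * δ ^ 2 ≤ ‖y - f₁‖ ^ 2 + ‖y - f₂‖ ^ 2 := by
    nlinarith [norm_nonneg (y - f₁), norm_nonneg (y - f₂), sq_nonneg (‖y - f₁‖ - ‖y - f₂‖)]
  rw [← enorm_eq_nnnorm, ← enorm_eq_nnnorm, ← ofReal_norm, ← ofReal_norm,
    ← ENNReal.ofReal_pow hδ, ← ENNReal.ofReal_pow (norm_nonneg _),
    ← ENNReal.ofReal_pow (norm_nonneg _), ← ENNReal.ofReal_ofNat 2,
    ← ENNReal.ofReal_mul zero_le_two, ← ENNReal.ofReal_add (by positivity) (by positivity)]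
  exact ENNReal.ofReal_le_ofReal hreal

variable {Ω : Type*} [MeasurableSpace Ω] [MeasurableSpace E] [OpensMeasurableSpace E]

/-- Le Cam's two-point bound. -/
theorem ofReal_sq_mul_le_iSup_lintegral {P : E → Measure Ω} {S : Set E} {f₁ f₂ : E}
    (hf₁ : f₁ ∈ S) (hf₂ : f₂ ∈ S) {Q : Measure Ω} {A : Set Ω}
    (hQ₁ : (P f₁).restrict A = Q.restrict A) (hQ₂ : (P f₂).restrict A = Q.restrict A)
    {est : Ω → E} (hest : Measurable est) {δ : ℝ} (hδ : 0 ≤ δ) (hδf : 2 * δ ≤ ‖f₁ - f₂‖) :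
    ENNReal.ofReal δ ^ 2 * Q A ≤ ⨆ f ∈ S, ∫⁻ x, (‖est x - f‖₊ : ℝ≥0∞) ^ 2 ∂(P f) := by
  set R := ⨆ f ∈ S, ∫⁻ x, (‖est x - f‖₊ : ℝ≥0∞) ^ 2 ∂(P f)
  have hrisk : ∀ f ∈ S, ∫⁻ x in A, (‖est x - f‖₊ : ℝ≥0∞) ^ 2 ∂(P f) ≤ R := fun f hf =>
    (setLIntegral_le_lintegral _ _).trans
      (le_biSup (fun f => ∫⁻ x, (‖est x - f‖₊ : ℝ≥0∞) ^ 2 ∂(P f)) hf)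
  have hmeas : Measurable fun x => (‖est x - f₁‖₊ : ℝ≥0∞) ^ 2 :=
    (show Continuous fun y : E => (‖y - f₁‖₊ : ℝ≥0∞) ^ 2 by fun_prop).measurable.comp hest
  refine (ENNReal.mul_le_mul_iff_right two_ne_zero ofNat_ne_top).1 ?_
  calc 2 * (ENNReal.ofReal δ ^ 2 * Q A)
      = ∫⁻ _ in A, 2 * ENNReal.ofReal δ ^ 2 ∂Q := by rw [setLIntegral_const, mul_assoc]
    _ ≤ ∫⁻ x in A, ((‖est x - f₁‖₊ : ℝ≥0∞) ^ 2 + (‖est x - f₂‖₊ : ℝ≥0∞) ^ 2) ∂Q :=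
        lintegral_mono fun x => two_mul_ofReal_sq_le_add_sq hδ hδf (est x)
    _ = (∫⁻ x in A, (‖est x - f₁‖₊ : ℝ≥0∞) ^ 2 ∂(P f₁))
          + ∫⁻ x in A, (‖est x - f₂‖₊ : ℝ≥0∞) ^ 2 ∂(P f₂) := by
        rw [lintegral_add_left hmeas, hQ₁, hQ₂]
    _ ≤ 2 * R := (add_le_add (hrisk f₁ hf₁) (hrisk f₂ hf₂)).trans_eq (two_mul R).symm

end TwoPoint

section WeightedNorm

variable {α : Type*} [MeasurableSpace α] {ν : Measure α}

lemma wnorm_smul (c : ℝ) (g f₀ : Lp ℝ 2 ν) :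
    wnorm (c • g) f₀ = ENNReal.ofReal |c| * wnorm g f₀ := by
  rw [wnorm, wnorm, ← ENNReal.essSup_const_mul]
  refine essSup_congr_ae ?_
  filter_upwards [Lp.coeFn_smul c g] with θ hθ
  rw [hθ, Pi.smul_apply, smul_eq_mul, abs_mul, ENNReal.ofReal_mul (abs_nonneg c), mul_div_assoc]

lemma ae_abs_le_of_wnorm_le_one {f₀ g : Lp ℝ 2 ν} (hf₀ : 0 ≤ᵐ[ν] ⇑f₀) (h : wnorm g f₀ ≤ 1) :
    ∀ᵐ θ ∂ν, |g θ| ≤ f₀ θ := by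
  filter_upwards [ENNReal.ae_le_essSup
    (fun θ => ENNReal.ofReal |g θ| / ENNReal.ofReal (f₀ θ)), hf₀] with θ hθ hf₀θ
  rw [← ENNReal.ofReal_le_ofReal_iff hf₀θ, ← one_mul (ENNReal.ofReal (f₀ θ)),
    ← ENNReal.div_le_iff_le_mul (Or.inr one_ne_top) (Or.inr one_ne_zero)]
  exact hθ.trans h

end WeightedNorm

section Mixture

variable {α : Type*} [MeasurableSpace α] {ν : Measure α} (π : α → ℕ → ℝ)

lemma mixN_apply (f : Lp ℝ 2 ν) (s : Set ℕ) :
    mixN ν π f s = ∑' k, ENNReal.ofReal (∫ θ, π θ k * f θ ∂ν) * s.indicator 1 k := by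
  rw [mixN, Measure.sum_apply _ (MeasurableSet.of_discrete)]
  simp only [Measure.smul_apply, Measure.dirac_apply, smul_eq_mul]

lemma mixN_singleton (f : Lp ℝ 2 ν) (k : ℕ) :
    mixN ν π f {k} = ENNReal.ofReal (∫ θ, π θ k * f θ ∂ν) := by
  rw [mixN_apply, tsum_eq_single k fun j hj => by simp [hj]]
  simp

instance (f : Lp ℝ 2 ν) : SigmaFinite (mixN ν π f) :=
  Measure.sigmaFinite_of_countable (Set.countable_range fun k : ℕ => ({k} : Set ℕ))
    (by rintro _ ⟨k, rfl⟩; simp [mixN_singleton]) (by ext; simp)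

lemma mixN_Iio (f : Lp ℝ 2 ν) (m : ℕ) :
    mixN ν π f (Set.Iio m) = ∑ k ∈ Finset.range m, ENNReal.ofReal (∫ θ, π θ k * f θ ∂ν) := by
  rw [mixN_apply, tsum_eq_sum (s := Finset.range m) fun k hk => by simp_all]
  exact Finset.sum_congr rfl fun k hk => by simp_all

lemma ofReal_sum_pow_le_pi_mixN (f : Lp ℝ 2 ν) (m n : ℕ) :
    ENNReal.ofReal (∑ k ∈ Finset.range m, ∫ θ, π θ k * f θ ∂ν) ^ n ≤
      (Measure.pi fun _ : Fin n => mixN ν π f) (Set.univ.pi fun _ => Set.Iio m) := by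
  rw [Measure.pi_pi, Finset.prod_const, Finset.card_univ, Fintype.card_fin, mixN_Iio]
  gcongr
  exact Finset.le_sum_of_subadditive _ ENNReal.ofReal_zero.le (fun _ _ => ofReal_add_le) _ _

lemma mixN_restrict_Iio_congr {f f' : Lp ℝ 2 ν} {m : ℕ}
    (h : ∀ k < m, ∫ θ, π θ k * f θ ∂ν = ∫ θ, π θ k * f' θ ∂ν) :
    (mixN ν π f).restrict (Set.Iio m) = (mixN ν π f').restrict (Set.Iio m) := by
  ext s hs
  rw [Measure.restrict_apply hs, Measure.restrict_apply hs, mixN_apply, mixN_apply]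
  refine tsum_congr fun k => ?_
  by_cases hk : k ∈ s ∩ Set.Iio m
  · rw [h k hk.2]
  · simp [Set.indicator_of_notMem hk]

end Mixture

section Approximation

variable {α : Type*} [MeasurableSpace α] {ν : Measure α}

lemma integral_mul_eq_inner {p : α → ℝ} {h : Lp ℝ 2 ν} (hp : ⇑h =ᵐ[ν] p) (f : Lp ℝ 2 ν) :
    ∫ θ, p θ * f θ ∂ν = inner ℝ h f := by
  rw [L2.inner_def]
  refine integral_congr_ae ?_
  filter_upwards [hp] with θ hθ
  simp [hθ, mul_comm]

def integralLinearMap (W : Submodule ℝ (Lp ℝ 2 ν)) (hW : ∀ g ∈ W, Integrable g ν) :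
    W →ₗ[ℝ] ℝ where
  toFun g := ∫ θ, (g : Lp ℝ 2 ν) θ ∂ν
  map_add' a b := by
    rw [Submodule.coe_add, integral_congr_ae (Lp.coeFn_add _ _)]
    exact integral_add (hW _ a.2) (hW _ b.2)
  map_smul' c a := by
    rw [Submodule.coe_smul, integral_congr_ae (Lp.coeFn_smul _ _)]
    exact integral_smul c _

lemma exists_mem_inf_orthogonal_integral_eq_zero {V W : Submodule ℝ (Lp ℝ 2 ν)}
    [FiniteDimensional ℝ W] (hVW : V ≤ W) (hW : ∀ g ∈ W, Integrable g ν)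
    (hdim : Module.finrank ℝ V + 1 < Module.finrank ℝ W) :
    ∃ g ∈ W ⊓ Vᗮ, ‖g‖ = 1 ∧ ∫ θ, g θ ∂ν = 0 := by
  have hU : Module.finrank ℝ ℝ < Module.finrank ℝ (Vᗮ ⊓ W : Submodule ℝ (Lp ℝ 2 ν)) := by
    have := Submodule.finrank_add_inf_finrank_orthogonal hVW
    rw [Module.finrank_self]
    omega
  obtain ⟨x, hx, hx0⟩ := Submodule.ne_bot_iff _ |>.1 <|
    LinearMap.ker_ne_bot_of_finrank_lt (f := integralLinearMap (Vᗮ ⊓ W) fun g hg => hW g hg.2) hU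
  have hx0' : (x : Lp ℝ 2 ν) ≠ 0 := by simpa using hx0
  refine ⟨‖(x : Lp ℝ 2 ν)‖⁻¹ • (x : Lp ℝ 2 ν), ?_, norm_smul_inv_norm hx0', ?_⟩
  · exact inf_comm Vᗮ W ▸ Submodule.smul_mem _ _ x.2
  · rw [integral_congr_ae (Lp.coeFn_smul _ _)]
    simp only [Pi.smul_apply, smul_eq_mul, integral_const_mul]
    rw [show ∫ θ, (x : Lp ℝ 2 ν) θ ∂ν = 0 from hx, mul_zero]

variable {Pi1 : ℕ → Lp ℝ 2 ν}

instance (M : ℕ) : FiniteDimensional ℝ (Vspan Pi1 M) :=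
  FiniteDimensional.span_of_finite ℝ ((Set.finite_Iio M).image Pi1)

lemma finrank_Vspan (hPi1 : LinearIndependent ℝ Pi1) (M : ℕ) :
    Module.finrank ℝ (Vspan Pi1 M) = M := by
  have hrange : Set.range (Pi1 ∘ Fin.val : Fin M → Lp ℝ 2 ν) = Pi1 '' Set.Iio M := by
    ext; simp [Fin.exists_iff]
  rw [Vspan, ← hrange, finrank_span_eq_card (hPi1.comp _ Fin.val_injective), Fintype.card_fin]

lemma Vspan_mono : Monotone (Vspan Pi1) := fun _ _ h =>
  Submodule.span_mono (Set.image_mono (Set.Iio_subset_Iio h))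

lemma integrable_of_mem_Vspan (hPi1 : ∀ k, Integrable (Pi1 k) ν) {M : ℕ} {g : Lp ℝ 2 ν}
    (hg : g ∈ Vspan Pi1 M) : Integrable g ν := by
  induction hg using Submodule.span_induction with
  | mem x hx =>
    obtain ⟨k, -, rfl⟩ := hx
    exact hPi1 k
  | zero => exact (integrable_zero _ _ _).congr (Lp.coeFn_zero ℝ 2 ν).symm
  | add x y _ _ hx hy => exact (hx.add hy).congr (Lp.coeFn_add x y).symm
  | smul c x _ hx => exact (hx.smul c).congr (Lp.coeFn_smul c x).symm

end Approximation

section LocalClass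

variable {α : Type*} [MeasurableSpace α] {ν : Measure α}

/-- `(f₀ + C_{f₀}(K,u,C,r)) ∩ H₁`. -/
def localClass (Pi1 : ℕ → Lp ℝ 2 ν) (f₀ : Lp ℝ 2 ν) (K : ℝ) (u : ℕ → ℝ) (C : ℝ) (r : ℕ) :
    Set (Lp ℝ 2 ν) :=
  {f | (∃ g ∈ classV Pi1 u C r, wnorm g f₀ ≤ ENNReal.ofReal K ∧ f = f₀ + g) ∧ f ∈ H1 ν}

variable {Pi1 : ℕ → Lp ℝ 2 ν}

lemma mixN_add_restrict_Iio (π : α → ℕ → ℝ) (hPi1 : ∀ k, ⇑(Pi1 k) =ᵐ[ν] fun θ => π θ k)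
    {m : ℕ} (f : Lp ℝ 2 ν) {g : Lp ℝ 2 ν} (hg : g ∈ (Vspan Pi1 m)ᗮ) :
    (mixN ν π (f + g)).restrict (Set.Iio m) = (mixN ν π f).restrict (Set.Iio m) :=
  mixN_restrict_Iio_congr π fun k hk => by
    rw [integral_mul_eq_inner (hPi1 k), integral_mul_eq_inner (hPi1 k), inner_add_right,
      Submodule.inner_right_of_mem_orthogonal
        (Submodule.subset_span (show Pi1 k ∈ Pi1 '' Set.Iio m from ⟨k, hk, rfl⟩)) hg, add_zero]

lemma pi_mixN_add_restrict_univ_pi (π : α → ℕ → ℝ)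
    (hPi1 : ∀ k, ⇑(Pi1 k) =ᵐ[ν] fun θ => π θ k) (n : ℕ) {m : ℕ} (f : Lp ℝ 2 ν) {g : Lp ℝ 2 ν}
    (hg : g ∈ (Vspan Pi1 m)ᗮ) :
    (Measure.pi fun _ : Fin n => mixN ν π (f + g)).restrict (Set.univ.pi fun _ => Set.Iio m) =
      (Measure.pi fun _ : Fin n => mixN ν π f).restrict (Set.univ.pi fun _ => Set.Iio m) := by
  simp only [Measure.restrict_pi_pi, mixN_add_restrict_Iio π hPi1 f hg]

lemma add_mem_H1 {f₀ g : Lp ℝ 2 ν} (hf₀ : f₀ ∈ H1 ν) (hg : Integrable g ν)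
    (hg0 : ∫ θ, g θ ∂ν = 0) (hgf₀ : ∀ᵐ θ ∂ν, |g θ| ≤ f₀ θ) : f₀ + g ∈ H1 ν := by
  have hf₀int : Integrable f₀ ν := Integrable.of_integral_ne_zero (hf₀.2 ▸ one_ne_zero)
  constructor
  · filter_upwards [Lp.coeFn_add f₀ g, hgf₀] with θ hθ hgθ
    rw [hθ, Pi.zero_apply, Pi.add_apply]
    linarith [neg_abs_le (g θ)]
  · rw [integral_congr_ae (Lp.coeFn_add f₀ g), Pi.add_def, integral_add hf₀int hg, hf₀.2, hg0,
      add_zero]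

lemma mem_classV_of_mem_Vspan {u : ℕ → ℝ} {C : ℝ} (hC : 0 ≤ C) (hu : ∀ M, 0 ≤ u M)
    (hu_anti : Antitone u) (r : ℕ) {m : ℕ} {g : Lp ℝ 2 ν} (hg : g ∈ Vspan Pi1 (m + 1))
    (hgn : ‖g‖ ≤ C * u m) : g ∈ classV Pi1 u C r := by
  intro M _
  rcases le_or_gt (m + 1) M with hM | hM
  · rw [Metric.infDist_zero_of_mem (Vspan_mono hM hg)]
    exact mul_nonneg hC (hu M)
  · calc Metric.infDist g (Vspan Pi1 M : Set (Lp ℝ 2 ν))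
        ≤ dist g 0 := Metric.infDist_le_dist_of_mem (Vspan Pi1 M).zero_mem
      _ ≤ C * u m := (dist_zero_right g).trans_le hgn
      _ ≤ C * u M := mul_le_mul_of_nonneg_left (hu_anti (Nat.lt_succ_iff.1 hM)) hC

lemma add_smul_mem_localClass {f₀ : Lp ℝ 2 ν} (hf₀ : f₀ ∈ H1 ν) {K : ℝ} (hK : K ≤ 1)
    {u : ℕ → ℝ} {C : ℝ} (hC : 0 ≤ C) (hu : ∀ M, 0 ≤ u M) (hu_anti : Antitone u) (r : ℕ)
    (hPi1 : ∀ k, Integrable (Pi1 k) ν) {m : ℕ} {W : Submodule ℝ (Lp ℝ 2 ν)}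
    (hW : W ≤ Vspan Pi1 (m + 1)) {g : Lp ℝ 2 ν} (hgW : g ∈ W) (hgn : ‖g‖ = 1)
    (hg0 : ∫ θ, g θ ∂ν = 0) {s : ℝ}
    (hs : ENNReal.ofReal |s| ≤
      min (ENNReal.ofReal K / Kinf f₀ (W : Set (Lp ℝ 2 ν))) (ENNReal.ofReal (C * u m))) :
    f₀ + s • g ∈ localClass Pi1 f₀ K u C r := by
  have hsg : s • g ∈ Vspan Pi1 (m + 1) := hW (W.smul_mem s hgW)
  have hsgn : ‖s • g‖ ≤ C * u m := by
    rw [norm_smul, hgn, mul_one, Real.norm_eq_abs]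
    exact (ENNReal.ofReal_le_ofReal_iff (mul_nonneg hC (hu m))).1 (hs.trans (min_le_right _ _))
  have hwg : wnorm g f₀ ≤ Kinf f₀ (W : Set (Lp ℝ 2 ν)) :=
    le_iSup₂_of_le (f := fun g (_ : g ∈ (W : Set (Lp ℝ 2 ν)) ∧ ‖g‖ = 1) => wnorm g f₀) g
      ⟨hgW, hgn⟩ le_rfl
  have hwsg : wnorm (s • g) f₀ ≤ ENNReal.ofReal K := by
    rw [wnorm_smul]
    calc ENNReal.ofReal |s| * wnorm g f₀
        ≤ ENNReal.ofReal K / Kinf f₀ W * Kinf f₀ W :=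
          mul_le_mul' (hs.trans (min_le_left _ _)) hwg
      _ ≤ ENNReal.ofReal K := by rw [mul_comm]; exact ENNReal.mul_div_le
  have hsg0 : ∫ θ, (s • g) θ ∂ν = 0 := by
    rw [integral_congr_ae (Lp.coeFn_smul s g), Pi.smul_def, integral_smul, hg0, smul_zero]
  refine ⟨⟨s • g, mem_classV_of_mem_Vspan hC hu hu_anti r hsg hsgn, hwsg, rfl⟩,
    add_mem_H1 hf₀ (integrable_of_mem_Vspan hPi1 hsg) hsg0 (ae_abs_le_of_wnorm_le_one hf₀.1 ?_)⟩
  exact hwsg.trans (ENNReal.ofReal_le_one.2 hK)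

end LocalClass

theorem statement3_general
    {d : ℕ} {Θ : Set (Fin d → ℝ)}
    (ν : Measure Θ)
    (π : Θ → ℕ → ℝ)
    -- (A1): the `Π 1_k` form a linearly independent sequence in `H ∩ L¹(ν)`
    (Pi1 : ℕ → Lp ℝ 2 ν) (hPi1 : ∀ k, ⇑(Pi1 k) =ᵐ[ν] fun θ => π θ k)
    (hPi1_int : ∀ k, Integrable (fun θ => π θ k) ν)
    (hPi1_li : LinearIndependent ℝ Pi1)
    -- data of the theorem
    (f₀ : Lp ℝ 2 ν) (hf₀ : f₀ ∈ H1 ν)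
    (u : ℕ → ℝ) (hu_pos : ∀ m, 0 < u m) (hu_dec : Antitone u)
    (C : ℝ) (hC : 0 < C) (r : ℕ) (K : ℝ) (hK_le : K ≤ 1)
    (n : ℕ)
    (fhat : (Fin n → ℕ) → Lp ℝ 2 ν)
    (hfhat : @Measurable _ _ _ (borel _) fhat)
    (m : ℕ) :
    (min (ENNReal.ofReal K /
          Kinf f₀ ((Vspan Pi1 (m + 2) ⊓ (Vspan Pi1 m)ᗮ : Submodule ℝ (Lp ℝ 2 ν)) :
            Set (Lp ℝ 2 ν)))
        (ENNReal.ofReal (C * u (m + 1)))) ^ 2 *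
      (ENNReal.ofReal (∑ k ∈ Finset.range m, ∫ θ, π θ k * f₀ θ ∂ν)) ^ n
    ≤ ⨆ f ∈ {f | (∃ g ∈ classV Pi1 u C r, wnorm g f₀ ≤ ENNReal.ofReal K ∧ f = f₀ + g) ∧
          f ∈ H1 ν},
        riskN ν π n f fhat := by
  let _ := borel (Lp ℝ 2 ν)
  have : BorelSpace (Lp ℝ 2 ν) := ⟨rfl⟩
  have hPi1_int' : ∀ k, Integrable (Pi1 k) ν := fun k => (hPi1_int k).congr (hPi1 k).symm
  obtain ⟨g, hgW, hgn, hg0⟩ := exists_mem_inf_orthogonal_integral_eq_zero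
    (Vspan_mono (Nat.le_add_right m 2)) (fun _ => integrable_of_mem_Vspan hPi1_int')
    (by rw [finrank_Vspan hPi1_li, finrank_Vspan hPi1_li]; omega)
  set b := min (ENNReal.ofReal K / Kinf f₀ ((Vspan Pi1 (m + 2) ⊓ (Vspan Pi1 m)ᗮ :
    Submodule ℝ (Lp ℝ 2 ν)) : Set (Lp ℝ 2 ν))) (ENNReal.ofReal (C * u (m + 1)))
  have hb : ENNReal.ofReal b.toReal = b :=
    ENNReal.ofReal_toReal (ne_top_of_le_ne_top ofReal_ne_top (min_le_right _ _))
  have hmem : ∀ s : ℝ, |s| = b.toReal → f₀ + s • g ∈ localClass Pi1 f₀ K u C r :=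
    fun s hs => add_smul_mem_localClass hf₀ hK_le hC.le (fun M => (hu_pos M).le) hu_dec r
      hPi1_int' inf_le_left hgW hgn hg0 (by rw [hs, hb])
  have hlaw (s : ℝ) := pi_mixN_add_restrict_univ_pi π hPi1 n f₀
    (Submodule.smul_mem _ s (Submodule.mem_inf.1 hgW).2)
  have hdist : 2 * b.toReal ≤ ‖f₀ + b.toReal • g - (f₀ + (-b.toReal) • g)‖ := by
    rw [add_sub_add_left_eq_sub, ← sub_smul, norm_smul, hgn, mul_one, Real.norm_eq_abs,
      sub_neg_eq_add, ← two_mul]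
    exact le_abs_self _
  rw [← hb]
  exact (mul_le_mul' le_rfl (ofReal_sum_pow_le_pi_mixN π f₀ m n)).trans <|
    ofReal_sq_mul_le_iSup_lintegral (hmem _ (abs_of_nonneg toReal_nonneg))
      (hmem _ (by rw [abs_neg, abs_of_nonneg toReal_nonneg])) (hlaw _) (hlaw _) hfhat
      toReal_nonneg hdist

theorem statement3
    {d : ℕ} {Θ : Set (Fin d → ℝ)} (hΘ : MeasurableSet Θ)
    (ν : Measure Θ) [SigmaFinite ν]
    (π : Θ → ℕ → ℝ)
    (hπ_meas : ∀ k, Measurable fun θ => π θ k)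
    (hπ_nonneg : ∀ θ k, 0 ≤ π θ k)
    (hπ_sum : ∀ θ, HasSum (fun k => π θ k) 1)
    -- (A1): the `Π 1_k` form a linearly independent sequence in `H ∩ L¹(ν)`
    (Pi1 : ℕ → Lp ℝ 2 ν) (hPi1 : ∀ k, ⇑(Pi1 k) =ᵐ[ν] fun θ => π θ k)
    (hPi1_int : ∀ k, Integrable (fun θ => π θ k) ν)
    (hPi1_li : LinearIndependent ℝ Pi1)
    -- data of the theorem
    (f₀ : Lp ℝ 2 ν) (hf₀ : f₀ ∈ H1 ν)
    (u : ℕ → ℝ) (hu_pos : ∀ m, 0 < u m) (hu_dec : Antitone u)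
    (C : ℝ) (hC : 0 < C) (r : ℕ) (K : ℝ) (hK_pos : 0 < K) (hK_le : K ≤ 1)
    (n : ℕ) (hn : 0 < n)
    (fhat : (Fin n → ℕ) → Lp ℝ 2 ν)
    (hfhat : @Measurable _ _ _ (borel _) fhat)
    (m : ℕ) (hm : r ≤ m) :
    (min (ENNReal.ofReal K /
          Kinf f₀ ((Vspan Pi1 (m + 2) ⊓ (Vspan Pi1 m)ᗮ : Submodule ℝ (Lp ℝ 2 ν)) :
            Set (Lp ℝ 2 ν)))
        (ENNReal.ofReal (C * u (m + 1)))) ^ 2 *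
      (ENNReal.ofReal (∑ k ∈ Finset.range m, ∫ θ, π θ k * f₀ θ ∂ν)) ^ n
    ≤ ⨆ f ∈ {f | (∃ g ∈ classV Pi1 u C r, wnorm g f₀ ≤ ENNReal.ofReal K ∧ f = f₀ + g) ∧
          f ∈ H1 ν},
        riskN ν π n f fhat :=
  statement3_general ν π Pi1 hPi1 hPi1_int hPi1_li f₀ hf₀ u hu_pos hu_dec C hC r K hK_le n fhat
    hfhat m
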